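/- arXiv:1304.3177 — 2 statements merged into one kernel-verified Lean document; each statement's English description precedes it below -/
import Mathlib

section
/- For any PE-CFG G and string x over T: there exists a string y with G xy ⤳CFG y if and only if G x ⤳CFG ε. Consequently, the language { x | ∃y, G xy ⤳CFG y } equals { x | G x ⤳CFG ε }. -/
/-- Parsing expressions over non-terminals `V` and terminals `T`. -/
inductive PExp (V T : Type) : Type where
  | eps : PExp V T
  | term : T → PExp V T
  | var : V → PExp V T
  | cat : PExp V T → PExp V T → PExp V T
  | alt : PExp V T → PExp V T → PExp V T

/-- The relation `G[p] v ⤳CFG w`, where the PE-CFG is given by its production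
function `P` (the initial expression is the first explicit argument). -/
inductive CFGMatch {V T : Type} (P : V → PExp V T) : PExp V T → List T → List T → Prop where
  | empty (x : List T) : CFGMatch P .eps x x
  | term (a : T) (x : List T) : CFGMatch P (.term a) (a :: x) x
  | var {A : V} {v w : List T} : CFGMatch P (P A) v w → CFGMatch P (.var A) v w
  | cat {p₁ p₂ : PExp V T} {v u w : List T} :
      CFGMatch P p₁ v u → CFGMatch P p₂ u w → CFGMatch P (.cat p₁ p₂) v w
  | altL {p₁ p₂ : PExp V T} {v w : List T} :
      CFGMatch P p₁ v w → CFGMatch P (.alt p₁ p₂) v w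
  | altR {p₁ p₂ : PExp V T} {v w : List T} :
      CFGMatch P p₂ v w → CFGMatch P (.alt p₁ p₂) v w

/-- Result of a PEG match: either the remaining suffix of the input, or failure. -/
inductive Res (T : Type) : Type where
  | str : List T → Res T
  | fail : Res T

/-- The relation `G[p] x ⤳PEG X` (ordered choice, explicit failure). -/
inductive PEGMatch {V T : Type} (P : V → PExp V T) : PExp V T → List T → Res T → Prop where
  | empty (x : List T) : PEGMatch P .eps x (.str x)
  | termS (a : T) (x : List T) : PEGMatch P (.term a) (a :: x) (.str x)
  | termF {b a : T} (x : List T) : b ≠ a → PEGMatch P (.term b) (a :: x) .fail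
  | termE (a : T) : PEGMatch P (.term a) [] .fail
  | var {A : V} {x : List T} {r : Res T} : PEGMatch P (P A) x r → PEGMatch P (.var A) x r
  | catS {p₁ p₂ : PExp V T} {v u : List T} {r : Res T} :
      PEGMatch P p₁ v (.str u) → PEGMatch P p₂ u r → PEGMatch P (.cat p₁ p₂) v r
  | catF {p₁ p₂ : PExp V T} {v : List T} :
      PEGMatch P p₁ v .fail → PEGMatch P (.cat p₁ p₂) v .fail
  | ordS {p₁ p₂ : PExp V T} {v w : List T} :
      PEGMatch P p₁ v (.str w) → PEGMatch P (.alt p₁ p₂) v (.str w)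
  | ordB {p₁ p₂ : PExp V T} {v w : List T} :
      PEGMatch P p₁ v .fail → PEGMatch P p₂ v (.str w) → PEGMatch P (.alt p₁ p₂) v (.str w)
  | ordF {p₁ p₂ : PExp V T} {v : List T} :
      PEGMatch P p₁ v .fail → PEGMatch P p₂ v .fail → PEGMatch P (.alt p₁ p₂) v .fail

/-- `Subterm q p`: the expression `q` is a subexpression of `p`. -/
inductive Subterm {V T : Type} : PExp V T → PExp V T → Prop where
  | refl (p : PExp V T) : Subterm p p
  | catL {q p₁ p₂ : PExp V T} : Subterm q p₁ → Subterm q (.cat p₁ p₂)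
  | catR {q p₁ p₂ : PExp V T} : Subterm q p₂ → Subterm q (.cat p₁ p₂)
  | altL {q p₁ p₂ : PExp V T} : Subterm q p₁ → Subterm q (.alt p₁ p₂)
  | altR {q p₁ p₂ : PExp V T} : Subterm q p₂ → Subterm q (.alt p₁ p₂)

/-- `q` occurs in the grammar `(P, pS)`: it is a subexpression of the initial
expression `pS` or of some production `P A`. -/
def OccursIn {V T : Type} (P : V → PExp V T) (pS : PExp V T) (q : PExp V T) : Prop :=
  Subterm q pS ∨ ∃ A : V, Subterm q (P A)

/-!
A derivation never inspects the part of the input it leaves unread, so a common suffix can be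
appended to, or cancelled from, both the input and the remainder of any derivation.
-/

namespace CFGMatch

variable {V T : Type} {P : V → PExp V T} {p : PExp V T}

theorem append_right {v w : List T} (h : CFGMatch P p v w) (z : List T) :
    CFGMatch P p (v ++ z) (w ++ z) := by
  induction h with
  | empty x => exact .empty _
  | term a x => exact .term a _
  | var _ ih => exact .var ih
  | cat _ _ ih₁ ih₂ => exact .cat ih₁ ih₂
  | altL _ ih => exact .altL ih
  | altR _ ih => exact .altR ih

theorem exists_eq_append {v w : List T} (h : CFGMatch P p v w) : ∃ u, v = u ++ w := by
  induction h with
  | empty x => exact ⟨[], rfl⟩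
  | term a x => exact ⟨[a], rfl⟩
  | var _ ih => exact ih
  | cat _ _ ih₁ ih₂ =>
    obtain ⟨a, rfl⟩ := ih₁
    obtain ⟨b, rfl⟩ := ih₂
    exact ⟨a ++ b, (List.append_assoc a b _).symm⟩
  | altL _ ih => exact ih
  | altR _ ih => exact ih

theorem of_append_right {v w z : List T} (h : CFGMatch P p (v ++ z) (w ++ z)) :
    CFGMatch P p v w := by
  generalize hv : v ++ z = v' at h
  generalize hw : w ++ z = w' at h
  induction h generalizing v w with
  | empty x =>
    obtain rfl : v = w := List.append_cancel_right (hv.trans hw.symm)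
    exact .empty v
  | term a x =>
    obtain rfl : v = a :: w := List.append_cancel_right (hv.trans (congrArg (a :: ·) hw.symm))
    exact .term a w
  | var _ ih => exact .var (ih hv hw)
  | cat h₁ h₂ ih₁ ih₂ =>
    -- the intermediate remainder also ends in `z`, since it ends in the final one
    subst hw
    obtain ⟨s, rfl⟩ := h₂.exists_eq_append
    exact .cat (ih₁ hv (List.append_assoc s w z)) (ih₂ (List.append_assoc s w z) rfl)
  | altL _ ih => exact .altL (ih hv hw)
  | altR _ ih => exact .altR (ih hv hw)

theorem append_right_iff {v w z : List T} :
    CFGMatch P p (v ++ z) (w ++ z) ↔ CFGMatch P p v w :=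
  ⟨of_append_right, fun h => h.append_right z⟩

end CFGMatch

theorem stmt_1_general {V T : Type}
    (P : V → PExp V T) (pS : PExp V T) :
    (∀ x : List T, (∃ y : List T, CFGMatch P pS (x ++ y) y) ↔ CFGMatch P pS x []) ∧
    {x : List T | ∃ y : List T, CFGMatch P pS (x ++ y) y} =
      {x : List T | CFGMatch P pS x []} := by
  have key (x : List T) : (∃ y, CFGMatch P pS (x ++ y) y) ↔ CFGMatch P pS x [] :=
    ⟨fun ⟨y, hy⟩ => (CFGMatch.append_right_iff (w := []) (z := y)).mp hy,
      fun h => ⟨[], (CFGMatch.append_right_iff (w := []) (z := [])).mpr h⟩⟩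
  exact ⟨key, Set.ext key⟩

/-- `∃ y, G xy ⤳CFG y` iff `G x ⤳CFG ε`; consequently the two
definitions of the language of `G` coincide. -/
theorem stmt_1 {V T : Type} [Fintype V] [Fintype T]
    (P : V → PExp V T) (pS : PExp V T) :
    (∀ x : List T, (∃ y : List T, CFGMatch P pS (x ++ y) y) ↔ CFGMatch P pS x []) ∧
    {x : List T | ∃ y : List T, CFGMatch P pS (x ++ y) y} =
      {x : List T | CFGMatch P pS x []} :=
  stmt_1_general P pS
end

section
/- Let G be a complete PE-CFG without ε expressions that is LL(1). Then for every parsing expression p occurring in G (a subexpression of p_S or of some P(A)) and all strings x, y over T: G[p] xy ⤳CFG y if and only if G[p] xy ⤳PEG y. -/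
/-- `FIRST^G(p)`: the terminals that can start a string matched by `G[p]`. -/
def FIRST {V T : Type} (P : V → PExp V T) (p : PExp V T) : Set T :=
  {a : T | ∃ x y : List T, CFGMatch P p (a :: (x ++ y)) y}

/-- The grammar `(P, pS)` has no `ε` expressions. -/
def NoEps {V T : Type} (P : V → PExp V T) (pS : PExp V T) : Prop :=
  ¬ OccursIn P pS PExp.eps

/-- The grammar `(P, pS)` (without `ε` expressions) is LL(1): the `FIRST` sets
of the two alternatives of every choice occurring in the grammar are disjoint. -/
def IsLL1 {V T : Type} (P : V → PExp V T) (pS : PExp V T) : Prop :=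
  ∀ q₁ q₂ : PExp V T, OccursIn P pS (.alt q₁ q₂) → FIRST P q₁ ∩ FIRST P q₂ = ∅

/-- The grammar `(P, pS)` is complete: every expression occurring in it either
succeeds or fails (as a PEG) on every input. -/
def Complete {V T : Type} (P : V → PExp V T) (pS : PExp V T) : Prop :=
  ∀ p : PExp V T, OccursIn P pS p → ∀ x : List T,
    (∃ x' : List T, PEGMatch P p x (.str x')) ∨ PEGMatch P p x .fail

/-!
A successful PEG match is a CFG derivation in which every choice happens to be resolved to
one of its alternatives, so the PEG-to-CFG direction holds for every grammar. Conversely,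
induct on the CFG derivation: the two semantics can only disagree when the derivation takes
the right alternative `q₂` of a choice `q₁ | q₂` while the PEG commits to `q₁`. By
completeness `q₁` either fails as a PEG (and the PEG then also tries `q₂`) or succeeds, hence
also matches as a CFG. Without `ε` every CFG match consumes a first symbol, which then lies in
`FIRST q₁ ∩ FIRST q₂`, contradicting LL(1).
-/

theorem Subterm.trans {V T : Type} {q p r : PExp V T}
    (hqp : Subterm q p) (hpr : Subterm p r) : Subterm q r := by
  induction hpr with
  | refl => exact hqp
  | catL _ ih => exact .catL ih
  | catR _ ih => exact .catR ih
  | altL _ ih => exact .altL ih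
  | altR _ ih => exact .altR ih

theorem OccursIn.of_subterm {V T : Type} {P : V → PExp V T} {pS p q : PExp V T}
    (hp : OccursIn P pS p) (hq : Subterm q p) : OccursIn P pS q :=
  hp.imp (hq.trans ·) fun ⟨A, h⟩ => ⟨A, hq.trans h⟩

theorem CFGMatch.exists_eq_append_s7 {V T : Type} {P : V → PExp V T} {p : PExp V T}
    {v w : List T} (h : CFGMatch P p v w) : ∃ u, v = u ++ w := by
  induction h with
  | empty x => exact ⟨[], rfl⟩
  | term a x => exact ⟨[a], rfl⟩
  | var _ ih | altL _ ih | altR _ ih => exact ih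
  | cat _ _ ih₁ ih₂ =>
    obtain ⟨u₁, rfl⟩ := ih₁
    obtain ⟨u₂, rfl⟩ := ih₂
    exact ⟨u₁ ++ u₂, (List.append_assoc _ _ _).symm⟩

theorem CFGMatch.of_pegMatch {V T : Type} {P : V → PExp V T} {p : PExp V T} {v w : List T}
    (h : PEGMatch P p v (.str w)) : CFGMatch P p v w := by
  generalize hr : Res.str w = r at h
  induction h generalizing w with
  | empty x => cases hr; exact .empty x
  | termS a x => cases hr; exact .term a x
  | termF | termE | catF | ordF => cases hr
  | var _ ih => exact .var (ih hr)
  | catS _ _ ih₁ ih₂ => exact .cat (ih₁ rfl) (ih₂ hr)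
  | ordS _ ih => cases hr; exact .altL (ih rfl)
  | ordB _ _ _ ih₂ => cases hr; exact .altR (ih₂ rfl)

section Grammar

variable {V T : Type} {P : V → PExp V T} {pS : PExp V T}

theorem CFGMatch.exists_head_mem_FIRST (hnoeps : NoEps P pS) {p : PExp V T} {v w : List T}
    (h : CFGMatch P p v w) (hp : OccursIn P pS p) :
    ∃ a u, v = a :: (u ++ w) ∧ a ∈ FIRST P p := by
  suffices ∃ a u, v = a :: (u ++ w) by
    obtain ⟨a, u, rfl⟩ := this
    exact ⟨a, u, rfl, u, w, h⟩
  induction h with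
  | empty x => exact absurd hp hnoeps
  | term a x => exact ⟨a, [], rfl⟩
  | @var A _ _ _ ih => exact ih (Or.inr ⟨A, .refl _⟩)
  | cat _ h₂ ih₁ _ =>
    obtain ⟨a, u₁, rfl⟩ := ih₁ (hp.of_subterm (.catL (.refl _)))
    obtain ⟨u₂, rfl⟩ := h₂.exists_eq_append_s7
    exact ⟨a, u₁ ++ u₂, by simp⟩
  | altL _ ih => exact ih (hp.of_subterm (.altL (.refl _)))
  | altR _ ih => exact ih (hp.of_subterm (.altR (.refl _)))

theorem not_cfgMatch_alt_both (hnoeps : NoEps P pS) (hll1 : IsLL1 P pS) {q₁ q₂ : PExp V T}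
    (hq : OccursIn P pS (.alt q₁ q₂)) {v w₁ w₂ : List T}
    (h₁ : CFGMatch P q₁ v w₁) (h₂ : CFGMatch P q₂ v w₂) : False := by
  obtain ⟨a₁, _, hv₁, ha₁⟩ := h₁.exists_head_mem_FIRST hnoeps (hq.of_subterm (.altL (.refl _)))
  obtain ⟨a₂, _, hv₂, ha₂⟩ := h₂.exists_head_mem_FIRST hnoeps (hq.of_subterm (.altR (.refl _)))
  obtain rfl : a₁ = a₂ := (List.cons.inj (hv₁.symm.trans hv₂)).1
  exact (hll1 q₁ q₂ hq).subset ⟨ha₁, ha₂⟩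

theorem PEGMatch.of_cfgMatch (hnoeps : NoEps P pS) (hll1 : IsLL1 P pS)
    (hcomplete : Complete P pS) {p : PExp V T} {v w : List T}
    (h : CFGMatch P p v w) (hp : OccursIn P pS p) : PEGMatch P p v (.str w) := by
  induction h with
  | empty x => exact absurd hp hnoeps
  | term a x => exact .termS a x
  | @var A _ _ _ ih => exact .var (ih (Or.inr ⟨A, .refl _⟩))
  | cat _ _ ih₁ ih₂ =>
    exact .catS (ih₁ (hp.of_subterm (.catL (.refl _)))) (ih₂ (hp.of_subterm (.catR (.refl _))))
  | altL _ ih => exact .ordS (ih (hp.of_subterm (.altL (.refl _))))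
  | @altR q₁ _ v _ h₂ ih =>
    obtain ⟨w₁, hs⟩ | hf := hcomplete q₁ (hp.of_subterm (.altL (.refl _))) v
    · exact (not_cfgMatch_alt_both hnoeps hll1 hp (.of_pegMatch hs) h₂).elim
    · exact .ordB hf (ih (hp.of_subterm (.altR (.refl _))))

end Grammar

theorem stmt_7_general {V T : Type}
    (P : V → PExp V T) (pS : PExp V T)
    (hnoeps : NoEps P pS) (hll1 : IsLL1 P pS) (hcomplete : Complete P pS)
    (p : PExp V T) (hp : OccursIn P pS p) (x y : List T) :
    CFGMatch P p (x ++ y) y ↔ PEGMatch P p (x ++ y) (.str y) :=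
  ⟨(PEGMatch.of_cfgMatch hnoeps hll1 hcomplete · hp), CFGMatch.of_pegMatch⟩

/-- for a complete LL(1) PE-CFG without `ε` expressions, every
expression occurring in the grammar matches the same prefixes whether
interpreted as a CFG or as a PEG. -/
theorem stmt_7 {V T : Type} [Fintype V] [Fintype T]
    (P : V → PExp V T) (pS : PExp V T)
    (hnoeps : NoEps P pS) (hll1 : IsLL1 P pS) (hcomplete : Complete P pS)
    (p : PExp V T) (hp : OccursIn P pS p) (x y : List T) :
    CFGMatch P p (x ++ y) y ↔ PEGMatch P p (x ++ y) (.str y) :=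
  stmt_7_general P pS hnoeps hll1 hcomplete p hp x y
end
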